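/- The code VT_a(2k;k) can correct any single edit error: for any two distinct codewords u, w ∈ VT_a(2k;k), B^{single-edit}(u) ∩ B^{single-edit}(w) = ∅. -/

import Mathlib

/-- VT syndrome (as a natural number sum) of a binary list. -/
def vtSyn (l : List Bool) : ℕ :=
  ∑ i : Fin l.length, ((i : ℕ) + 1) * (if l.get i then 1 else 0)

lemma count_true_eq_sum (t : List Bool) :
    t.count true = ∑ i : Fin t.length, (if t.get i then 1 else 0) := by
  induction t with
  | nil => simp
  | cons a t ih =>
    simp only [List.length_cons, Fin.sum_univ_succ, List.count_cons, ih]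
    cases a <;> simp [add_comm]

lemma vtSyn_cons (b : Bool) (t : List Bool) :
    vtSyn (b :: t) = (if b then 1 else 0) + vtSyn t + t.count true := by
  rw [vtSyn, vtSyn, count_true_eq_sum]
  simp only [List.length_cons, Fin.sum_univ_succ]
  rw [add_assoc, ← Finset.sum_add_distrib]
  simp only [List.get_eq_getElem, Fin.val_zero, List.getElem_cons_zero, Fin.val_succ,
    List.getElem_cons_succ, Fin.coe_castSucc]
  rw [zero_add, one_mul]
  congr 1
  apply Finset.sum_congr rfl
  intro i _
  ring

lemma count_true_eraseIdx : ∀ (l : List Bool) (i : ℕ) (_ : i < l.length),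
    l.count true = (l.eraseIdx i).count true + (if l[i] then 1 else 0) := by
  intro l
  induction l with
  | nil => intro i h; simp at h
  | cons a t ih =>
    intro i h
    match i with
    | 0 => cases a <;> simp [List.count_cons]
    | (j+1) =>
      have hj : j < t.length := by simpa using h
      have := ih j hj
      cases a <;> simp [List.count_cons, this] <;> omega

lemma count_true_set : ∀ (l : List Bool) (i : ℕ) (b : Bool) (_ : i < l.length),
    (l.set i b).count true + (if l[i] then 1 else 0)
      = l.count true + (if b then 1 else 0) := by
  intro l
  induction l with
  | nil => intro i b h; simp at h
  | cons a t ih =>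
    intro i b h
    match i with
    | 0 => cases a <;> cases b <;> simp [List.count_cons] <;> omega
    | (j+1) =>
      have hj : j < t.length := by simpa using h
      have := ih j b hj
      cases a <;> simp [List.count_cons, List.set_cons_succ] <;> omega

lemma vtSyn_eraseIdx : ∀ (l : List Bool) (i : ℕ) (_ : i < l.length),
    vtSyn l = vtSyn (l.eraseIdx i) + (i + 1) * (if l[i] then 1 else 0)
      + (l.drop (i+1)).count true := by
  intro l
  induction l with
  | nil => intro i h; simp at h
  | cons a t ih =>
    intro i h
    match i with
    | 0 => simp [vtSyn_cons, List.eraseIdx]; omega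
    | (j+1) =>
      have hj : j < t.length := by simpa using h
      have h1 := ih j hj
      have h2 := count_true_eraseIdx t j hj
      simp only [List.eraseIdx_cons_succ, vtSyn_cons, List.getElem_cons_succ,
        List.drop_succ_cons]
      rw [show j + 1 + 1 = (j+1) + 1 from rfl, add_mul, one_mul]
      generalize hY : (j + 1) * (if t[j] = true then 1 else 0) = Y at h1 ⊢
      generalize hX : (if t[j] = true then (1:ℕ) else 0) = X at h2 ⊢
      omega

lemma vtSyn_set : ∀ (l : List Bool) (i : ℕ) (b : Bool) (_ : i < l.length),
    vtSyn (l.set i b) + (i + 1) * (if l[i] then 1 else 0)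
      = vtSyn l + (i + 1) * (if b then 1 else 0) := by
  intro l
  induction l with
  | nil => intro i b h; simp at h
  | cons a t ih =>
    intro i b h
    match i with
    | 0 => cases a <;> cases b <;> simp [vtSyn_cons] <;> omega
    | (j+1) =>
      have hj : j < t.length := by simpa using h
      have h1 := ih j b hj
      have h2 := count_true_set t j b hj
      simp only [List.set_cons_succ, vtSyn_cons, List.getElem_cons_succ]
      have e1 : (j + 1 + 1) * (if t[j] = true then (1:ℕ) else 0)
          = (j + 1) * (if t[j] = true then 1 else 0) + (if t[j] = true then 1 else 0) := by
        ring
      have e2 : (j + 1 + 1) * (if b = true then (1:ℕ) else 0)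
          = (j + 1) * (if b = true then 1 else 0) + (if b = true then 1 else 0) := by
        ring
      rw [e1, e2]
      generalize hY : (j + 1) * (if t[j] = true then 1 else 0) = Y at h1 ⊢
      generalize hZ : (j + 1) * (if b = true then 1 else 0) = Z at h1 ⊢
      generalize hX : (if t[j] = true then (1:ℕ) else 0) = X at h2 ⊢
      generalize hW : (if b = true then (1:ℕ) else 0) = W at h2 ⊢
      omega

lemma set_self : ∀ (l : List Bool) (i : ℕ) (_ : i < l.length), l.set i l[i] = l := by
  intro l
  induction l with
  | nil => intro i h; simp at h
  | cons a t ih =>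
    intro i h
    match i with
    | 0 => simp
    | (j+1) =>
      have hj : j < t.length := by simpa using h
      simp [ih j hj]

lemma drop_eraseIdx : ∀ (l : List Bool) (i : ℕ) (_ : i < l.length),
    (l.eraseIdx i).drop i = l.drop (i+1) := by
  intro l
  induction l with
  | nil => intro i h; simp at h
  | cons a t ih =>
    intro i h
    match i with
    | 0 => simp [List.eraseIdx]
    | (j+1) =>
      have hj : j < t.length := by simpa using h
      simp [List.eraseIdx_cons_succ, ih j hj]

lemma insertIdx_eraseIdx_self : ∀ (l : List Bool) (i : ℕ) (_ : i < l.length),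
    (l.eraseIdx i).insertIdx i l[i] = l := by
  intro l
  induction l with
  | nil => intro i h; simp at h
  | cons a t ih =>
    intro i h
    match i with
    | 0 => simp [List.eraseIdx]
    | (j+1) =>
      have hj : j < t.length := by simpa using h
      simp [List.eraseIdx_cons_succ, List.insertIdx_succ_cons, ih j hj]

lemma insertIdx_swap : ∀ (l : List Bool) (i : ℕ) (b : Bool) (_ : i < l.length)
    (_ : l[i] = b), l.insertIdx i b = l.insertIdx (i+1) b := by
  intro l
  induction l with
  | nil => intro i b h; simp at h
  | cons a t ih =>
    intro i b h hb
    match i with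
    | 0 =>
      simp at hb
      simp [List.insertIdx_succ_cons, hb]
    | (j+1) =>
      have hj : j < t.length := by simpa using h
      simp at hb
      simp [List.insertIdx_succ_cons, ih j b hj hb]

lemma eraseIdx_swap : ∀ (l : List Bool) (i : ℕ) (_ : i + 1 < l.length)
    (_ : l[i]'(by omega) = l[i+1]), l.eraseIdx i = l.eraseIdx (i+1) := by
  intro l
  induction l with
  | nil => intro i h; simp at h
  | cons a t ih =>
    intro i h hb
    match i with
    | 0 =>
      match t, h with
      | c :: t', _ =>
        simp at hb
        simp [List.eraseIdx, hb]
    | (j+1) =>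
      have hj : j + 1 < t.length := by simpa using h
      simp at hb
      simp [List.eraseIdx_cons_succ, ih j hj hb]

lemma insertIdx_chain (d : ℕ) : ∀ (l : List Bool) (p : ℕ) (b : Bool),
    p + d ≤ l.length → (∀ r, p ≤ r → r < p + d → l.getD r false = b) →
    l.insertIdx p b = l.insertIdx (p + d) b := by
  induction d with
  | zero => intro l p b _ _; rfl
  | succ d ihd =>
    intro l p b hlen H
    have hp : p < l.length := by omega
    have hb : l[p] = b := by
      have := H p le_rfl (by omega)
      rwa [List.getD_eq_getElem l false hp] at this
    rw [insertIdx_swap l p b hp hb,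
      ihd l (p+1) b (by omega) (fun r h1 h2 => H r (by omega) (by omega)),
      show p + 1 + d = p + (d + 1) by omega]

lemma eraseIdx_chain (d : ℕ) : ∀ (l : List Bool) (p : ℕ) (b : Bool),
    p + d < l.length → (∀ r, p ≤ r → r ≤ p + d → l.getD r false = b) →
    l.eraseIdx p = l.eraseIdx (p + d) := by
  induction d with
  | zero => intro l p b _ _; rfl
  | succ d ihd =>
    intro l p b hlen H
    have hp : p + 1 < l.length := by omega
    have hb : l[p]'(by omega) = l[p+1] := by
      have h1 := H p le_rfl (by omega)
      have h2 := H (p+1) (by omega) (by omega)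
      rw [List.getD_eq_getElem l false (by omega : p < l.length)] at h1
      rw [List.getD_eq_getElem l false hp] at h2
      rw [h1, h2]
    rw [eraseIdx_swap l p hp hb,
      ihd l (p+1) b (by omega) (fun r h1 h2 => H r (by omega) (by omega)),
      show p + 1 + d = p + (d + 1) by omega]

lemma mem_seg (l : List Bool) (p q r : ℕ) (hpr : p ≤ r) (hrq : r < q)
    (hq : q ≤ l.length) : l.getD r false ∈ (l.drop p).take (q - p) := by
  have hr : r < l.length := by omega
  have hlen : ((l.drop p).take (q - p)).length = q - p := by
    simp [List.length_take, List.length_drop]; omega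
  have hr' : r - p < ((l.drop p).take (q - p)).length := by omega
  have hval : ((l.drop p).take (q - p))[r - p] = l[r] := by
    rw [List.getElem_take, List.getElem_drop]
    congr 1
    omega
  rw [List.getD_eq_getElem l false hr, ← hval]
  exact List.getElem_mem hr'

lemma getD_of_count_zero (l : List Bool) (p q : ℕ)
    (hq : q ≤ l.length) (hc : ((l.drop p).take (q - p)).count true = 0) :
    ∀ r, p ≤ r → r < q → l.getD r false = false := by
  intro r h1 h2
  have hm := mem_seg l p q r h1 h2 hq
  have := List.count_eq_zero.mp hc
  cases hx : l.getD r false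
  · rfl
  · rw [hx] at hm; exact absurd hm this

lemma getD_of_count_full (l : List Bool) (p q : ℕ)
    (hq : q ≤ l.length)
    (hc : ((l.drop p).take (q - p)).count true = ((l.drop p).take (q - p)).length) :
    ∀ r, p ≤ r → r < q → l.getD r false = true := by
  intro r h1 h2
  have hm := mem_seg l p q r h1 h2 hq
  exact (List.count_eq_length.mp hc _ hm).symm

lemma count_drop_split (l : List Bool) (p q : ℕ) (hpq : p ≤ q) :
    (l.drop p).count true = ((l.drop p).take (q - p)).count true
      + (l.drop q).count true := by
  conv_lhs => rw [← List.take_append_drop (q - p) (l.drop p)]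
  rw [List.count_append, List.drop_drop, show p + (q - p) = q by omega]

lemma case_DD_aux (k p q : ℕ) (u w v : List Bool) (hu : u.length = k) (hw : w.length = k)
    (hp : p < k) (hq : q < k) (hpq : p ≤ q)
    (hvu : v = u.eraseIdx p) (hvw : v = w.eraseIdx q)
    (hdvd : (2 * (k:ℤ)) ∣ (vtSyn u : ℤ) - (vtSyn w : ℤ)) : u = w := by
  have hp' : p < u.length := by omega
  have hq' : q < w.length := by omega
  have hvlen : v.length = k - 1 := by
    rw [hvu, List.length_eraseIdx, if_pos hp', hu]
  have e1 := vtSyn_eraseIdx u p hp'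
  rw [← drop_eraseIdx u p hp', ← hvu] at e1
  have e2 := vtSyn_eraseIdx w q hq'
  rw [← drop_eraseIdx w q hq', ← hvw] at e2
  have hsplit := count_drop_split v p q hpq
  have hseg : ((v.drop p).take (q - p)).length = q - p := by
    simp only [List.length_take, List.length_drop]
    omega
  have hsegle : ((v.drop p).take (q - p)).count true ≤ q - p := by
    have := List.count_le_length (a := true) (l := ((v.drop p).take (q - p)))
    omega
  have hcp : (v.drop p).count true ≤ v.length - p := by
    have := List.count_le_length (a := true) (l := (v.drop p))
    simpa using this
  have hcq : (v.drop q).count true ≤ v.length - q := by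
    have := List.count_le_length (a := true) (l := (v.drop q))
    simpa using this
  have hu2 : v.insertIdx p (u[p]'hp') = u := by
    rw [hvu]; exact insertIdx_eraseIdx_self u p hp'
  have hw2 : v.insertIdx q (w[q]'hq') = w := by
    rw [hvw]; exact insertIdx_eraseIdx_self w q hq'
  cases hbu : u[p]'hp' <;> cases hbw : w[q]'hq' <;> rw [hbu] at e1 hu2 <;>
      rw [hbw] at e2 hw2 <;> simp only [if_true, if_false, Bool.false_eq_true,
        mul_one, mul_zero, add_zero] at e1 e2
  · -- both false
    have hzero : (vtSyn u : ℤ) - (vtSyn w : ℤ) = 0 := by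
      apply Int.eq_zero_of_abs_lt_dvd hdvd
      rw [abs_lt]; constructor <;> omega
    have hcnt : ((v.drop p).take (q - p)).count true = 0 := by omega
    have hall := getD_of_count_zero v p q (by omega) hcnt
    have hchain := insertIdx_chain (q - p) v p false (by omega)
      (fun r h1 h2 => hall r h1 (by omega))
    rw [show p + (q - p) = q by omega] at hchain
    rw [← hu2, ← hw2, hchain]
  · -- u[p] = false, w[q] = true : impossible
    exfalso
    have hzero : (vtSyn u : ℤ) - (vtSyn w : ℤ) = 0 := by
      apply Int.eq_zero_of_abs_lt_dvd hdvd
      rw [abs_lt]; constructor <;> omega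
    omega
  · -- u[p] = true, w[q] = false : impossible
    exfalso
    have hzero : (vtSyn u : ℤ) - (vtSyn w : ℤ) = 0 := by
      apply Int.eq_zero_of_abs_lt_dvd hdvd
      rw [abs_lt]; constructor <;> omega
    omega
  · -- both true
    have hzero : (vtSyn u : ℤ) - (vtSyn w : ℤ) = 0 := by
      apply Int.eq_zero_of_abs_lt_dvd hdvd
      rw [abs_lt]; constructor <;> omega
    have hcnt : ((v.drop p).take (q - p)).count true
        = ((v.drop p).take (q - p)).length := by omega
    have hall := getD_of_count_full v p q (by omega) hcnt
    have hchain := insertIdx_chain (q - p) v p true (by omega)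
      (fun r h1 h2 => hall r h1 (by omega))
    rw [show p + (q - p) = q by omega] at hchain
    rw [← hu2, ← hw2, hchain]

lemma case_DD (k p q : ℕ) (u w v : List Bool) (hu : u.length = k) (hw : w.length = k)
    (hp : p < k) (hq : q < k)
    (hvu : v = u.eraseIdx p) (hvw : v = w.eraseIdx q)
    (hdvd : (2 * (k:ℤ)) ∣ (vtSyn u : ℤ) - (vtSyn w : ℤ)) : u = w := by
  rcases le_total p q with h | h
  · exact case_DD_aux k p q u w v hu hw hp hq h hvu hvw hdvd
  · have hdvd' : (2 * (k:ℤ)) ∣ (vtSyn w : ℤ) - (vtSyn u : ℤ) := by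
      have := dvd_neg.mpr hdvd
      rwa [neg_sub] at this
    exact (case_DD_aux k q p w u v hw hu hq hp h hvw hvu hdvd').symm

lemma case_II_aux (k p q : ℕ) (u w v : List Bool) (b c : Bool)
    (hk2 : 2 ≤ k) (hu : u.length = k) (hw : w.length = k)
    (hp : p ≤ k) (hq : q ≤ k) (hpq : p ≤ q)
    (hvu : v = u.insertIdx p b) (hvw : v = w.insertIdx q c)
    (hdvd : (2 * (k:ℤ)) ∣ (vtSyn u : ℤ) - (vtSyn w : ℤ)) : u = w := by
  have hp' : p ≤ u.length := by omega
  have hq' : q ≤ w.length := by omega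
  have hvlen : v.length = k + 1 := by
    rw [hvu, List.length_insertIdx_of_le_length hp', hu]
  have hu2 : v.eraseIdx p = u := by rw [hvu, List.eraseIdx_insertIdx_self]
  have hw2 : v.eraseIdx q = w := by rw [hvw, List.eraseIdx_insertIdx_self]
  rcases eq_or_lt_of_le hpq with rfl | hplt
  · rw [← hu2, ← hw2]
  have hpv : p < v.length := by omega
  have hqv : q < v.length := by omega
  have e1 := vtSyn_eraseIdx v p hpv
  rw [hu2] at e1
  have e2 := vtSyn_eraseIdx v q hqv
  rw [hw2] at e2
  have hsplit := count_drop_split v (p+1) (q+1) (by omega)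
  have hseg : ((v.drop (p+1)).take (q + 1 - (p+1))).length = q - p := by
    simp only [List.length_take, List.length_drop]
    omega
  have hsegle : ((v.drop (p+1)).take (q + 1 - (p+1))).count true ≤ q - p := by
    have := List.count_le_length (a := true) (l := ((v.drop (p+1)).take (q + 1 - (p+1))))
    omega
  have hcp : (v.drop (p+1)).count true ≤ v.length - (p+1) := by
    have := List.count_le_length (a := true) (l := (v.drop (p+1)))
    simpa using this
  have hcq : (v.drop (q+1)).count true ≤ v.length - (q+1) := by
    have := List.count_le_length (a := true) (l := (v.drop (q+1)))
    simpa using this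
  have hb1 : vtSyn u ≤ vtSyn v ∧ vtSyn v ≤ vtSyn u + (k+1) := by
    cases hbp : v[p]'hpv <;> rw [hbp] at e1 <;> simp only [if_true, if_false,
      Bool.false_eq_true, mul_one, mul_zero, add_zero] at e1 <;>
      constructor <;> omega
  have hb2 : vtSyn w ≤ vtSyn v ∧ vtSyn v ≤ vtSyn w + (k+1) := by
    cases hbq : v[q]'hqv <;> rw [hbq] at e2 <;> simp only [if_true, if_false,
      Bool.false_eq_true, mul_one, mul_zero, add_zero] at e2 <;>
      constructor <;> omega
  have hzero : (vtSyn u : ℤ) - (vtSyn w : ℤ) = 0 := by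
    apply Int.eq_zero_of_abs_lt_dvd hdvd
    rw [abs_lt]
    constructor <;> omega
  have hSuw : vtSyn u = vtSyn w := by omega
  cases hbp : v[p]'hpv <;> cases hbq : v[q]'hqv <;> rw [hbp] at e1 <;>
      rw [hbq] at e2 <;> simp only [if_true, if_false, Bool.false_eq_true,
        mul_one, mul_zero, add_zero] at e1 e2
  · -- both false
    have hcnt : ((v.drop (p+1)).take (q + 1 - (p+1))).count true = 0 := by omega
    have hall := getD_of_count_zero v (p+1) (q+1) (by omega) hcnt
    have hall' : ∀ r, p ≤ r → r ≤ p + (q - p) → v.getD r false = false := by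
      intro r h1 h2
      rcases eq_or_lt_of_le h1 with rfl | h1'
      · rw [List.getD_eq_getElem v false hpv, hbp]
      · exact hall r (by omega) (by omega)
    have hchain := eraseIdx_chain (q - p) v p false (by omega) hall'
    rw [show p + (q - p) = q by omega] at hchain
    rw [← hu2, ← hw2, hchain]
  · exfalso; omega
  · exfalso; omega
  · -- both true
    have hcnt : ((v.drop (p+1)).take (q + 1 - (p+1))).count true
        = ((v.drop (p+1)).take (q + 1 - (p+1))).length := by omega
    have hall := getD_of_count_full v (p+1) (q+1) (by omega) hcnt
    have hall' : ∀ r, p ≤ r → r ≤ p + (q - p) → v.getD r false = true := by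
      intro r h1 h2
      rcases eq_or_lt_of_le h1 with rfl | h1'
      · rw [List.getD_eq_getElem v false hpv, hbp]
      · exact hall r (by omega) (by omega)
    have hchain := eraseIdx_chain (q - p) v p true (by omega) hall'
    rw [show p + (q - p) = q by omega] at hchain
    rw [← hu2, ← hw2, hchain]

lemma case_II (k p q : ℕ) (u w v : List Bool) (b c : Bool)
    (hk2 : 2 ≤ k) (hu : u.length = k) (hw : w.length = k)
    (hp : p ≤ k) (hq : q ≤ k)
    (hvu : v = u.insertIdx p b) (hvw : v = w.insertIdx q c)
    (hdvd : (2 * (k:ℤ)) ∣ (vtSyn u : ℤ) - (vtSyn w : ℤ)) : u = w := by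
  rcases le_total p q with h | h
  · exact case_II_aux k p q u w v b c hk2 hu hw hp hq h hvu hvw hdvd
  · have hdvd' : (2 * (k:ℤ)) ∣ (vtSyn w : ℤ) - (vtSyn u : ℤ) := by
      have := dvd_neg.mpr hdvd
      rwa [neg_sub] at this
    exact (case_II_aux k q p w u v c b hk2 hw hu hq hp h hvw hvu hdvd').symm

lemma eq_of_set (v u : List Bool) (p : ℕ) (hp : p < v.length) (b : Bool)
    (h : v.set p b = u) (hb : v[p]'hp = b) : u = v := by
  rw [← h, ← hb]
  exact set_self v p hp

lemma case_SS (k p q : ℕ) (u w v : List Bool) (b c : Bool)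
    (hu : u.length = k) (hw : w.length = k) (hp : p < k) (hq : q < k)
    (hvu : v = u.set p b) (hvw : v = w.set q c)
    (hdvd : (2 * (k:ℤ)) ∣ (vtSyn u : ℤ) - (vtSyn w : ℤ)) : u = w := by
  have hp' : p < u.length := by omega
  have hq' : q < w.length := by omega
  have hvl : v.length = k := by rw [hvu, List.length_set, hu]
  have hpv : p < v.length := by omega
  have hqv : q < v.length := by omega
  have s1 := vtSyn_set u p b hp'
  rw [← hvu] at s1
  have s2 := vtSyn_set w q c hq'
  rw [← hvw] at s2
  have hvp : v[p]'hpv = b := by simp [hvu]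
  have hvq : v[q]'hqv = c := by simp [hvw]
  have hu0 : v.set p (u[p]'hp') = u := by
    rw [hvu, List.set_set]
    exact set_self u p hp'
  have hw0 : v.set q (w[q]'hq') = w := by
    rw [hvw, List.set_set]
    exact set_self w q hq'
  cases hbu : u[p]'hp' <;> cases hbb : b <;> cases hbw : w[q]'hq' <;> cases hbc : c <;>
    rw [hbu] at s1 hu0 <;> rw [hbw] at s2 hw0 <;> rw [hbb] at s1 hvp <;>
    rw [hbc] at s2 hvq <;>
    simp only [Bool.false_eq_true, if_false, if_true, mul_zero, mul_one, add_zero,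
      reduceIte] at s1 s2
  · exact (eq_of_set v u p hpv false hu0 hvp).trans (eq_of_set v w q hqv false hw0 hvq).symm
  · exfalso
    have huv : u = v := eq_of_set v u p hpv false hu0 hvp
    have hsv : vtSyn u = vtSyn v := by rw [huv]
    have hzero : (vtSyn u : ℤ) - (vtSyn w : ℤ) = 0 := by
      apply Int.eq_zero_of_abs_lt_dvd hdvd
      rw [abs_lt]
      constructor <;> omega
    omega
  · exfalso
    have huv : u = v := eq_of_set v u p hpv false hu0 hvp
    have hsv : vtSyn u = vtSyn v := by rw [huv]
    have hzero : (vtSyn u : ℤ) - (vtSyn w : ℤ) = 0 := by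
      apply Int.eq_zero_of_abs_lt_dvd hdvd
      rw [abs_lt]
      constructor <;> omega
    omega
  · exact (eq_of_set v u p hpv false hu0 hvp).trans (eq_of_set v w q hqv true hw0 hvq).symm
  · exfalso
    have hwv : w = v := eq_of_set v w q hqv false hw0 hvq
    have hsv : vtSyn w = vtSyn v := by rw [hwv]
    have hzero : (vtSyn u : ℤ) - (vtSyn w : ℤ) = 0 := by
      apply Int.eq_zero_of_abs_lt_dvd hdvd
      rw [abs_lt]
      constructor <;> omega
    omega
  · have hzero : (vtSyn u : ℤ) - (vtSyn w : ℤ) = 0 := by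
      apply Int.eq_zero_of_abs_lt_dvd hdvd
      rw [abs_lt]
      constructor <;> omega
    have hpq : p = q := by omega
    subst hpq
    rw [← hu0, ← hw0]
  · exfalso
    have heq : (vtSyn u : ℤ) - (vtSyn w : ℤ) = -((p:ℤ) + q + 2) := by omega
    rw [heq] at hdvd
    have hd2 : (2*(k:ℤ)) ∣ ((p:ℤ) + q + 2) := by
      have := dvd_neg.mpr hdvd
      rwa [neg_neg] at this
    have hle : 2*(k:ℤ) ≤ (p:ℤ) + q + 2 := Int.le_of_dvd (by omega) hd2
    have hpq : p = q := by omega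
    subst hpq
    exact Bool.noConfusion (hvp.symm.trans hvq)
  · exfalso
    have hwv : w = v := eq_of_set v w q hqv true hw0 hvq
    have hsv : vtSyn w = vtSyn v := by rw [hwv]
    have hzero : (vtSyn u : ℤ) - (vtSyn w : ℤ) = 0 := by
      apply Int.eq_zero_of_abs_lt_dvd hdvd
      rw [abs_lt]
      constructor <;> omega
    omega
  · exfalso
    have hwv : w = v := eq_of_set v w q hqv false hw0 hvq
    have hsv : vtSyn w = vtSyn v := by rw [hwv]
    have hzero : (vtSyn u : ℤ) - (vtSyn w : ℤ) = 0 := by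
      apply Int.eq_zero_of_abs_lt_dvd hdvd
      rw [abs_lt]
      constructor <;> omega
    omega
  · exfalso
    have heq : (vtSyn u : ℤ) - (vtSyn w : ℤ) = ((p:ℤ) + q + 2) := by omega
    rw [heq] at hdvd
    have hd2 : (2*(k:ℤ)) ∣ ((p:ℤ) + q + 2) := hdvd
    have hle : 2*(k:ℤ) ≤ (p:ℤ) + q + 2 := Int.le_of_dvd (by omega) hd2
    have hpq : p = q := by omega
    subst hpq
    exact Bool.noConfusion (hvp.symm.trans hvq)
  · have hzero : (vtSyn u : ℤ) - (vtSyn w : ℤ) = 0 := by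
      apply Int.eq_zero_of_abs_lt_dvd hdvd
      rw [abs_lt]
      constructor <;> omega
    have hpq : p = q := by omega
    subst hpq
    rw [← hu0, ← hw0]
  · exfalso
    have hwv : w = v := eq_of_set v w q hqv true hw0 hvq
    have hsv : vtSyn w = vtSyn v := by rw [hwv]
    have hzero : (vtSyn u : ℤ) - (vtSyn w : ℤ) = 0 := by
      apply Int.eq_zero_of_abs_lt_dvd hdvd
      rw [abs_lt]
      constructor <;> omega
    omega
  · exact (eq_of_set v u p hpv true hu0 hvp).trans (eq_of_set v w q hqv false hw0 hvq).symm
  · exfalso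
    have huv : u = v := eq_of_set v u p hpv true hu0 hvp
    have hsv : vtSyn u = vtSyn v := by rw [huv]
    have hzero : (vtSyn u : ℤ) - (vtSyn w : ℤ) = 0 := by
      apply Int.eq_zero_of_abs_lt_dvd hdvd
      rw [abs_lt]
      constructor <;> omega
    omega
  · exfalso
    have huv : u = v := eq_of_set v u p hpv true hu0 hvp
    have hsv : vtSyn u = vtSyn v := by rw [huv]
    have hzero : (vtSyn u : ℤ) - (vtSyn w : ℤ) = 0 := by
      apply Int.eq_zero_of_abs_lt_dvd hdvd
      rw [abs_lt]
      constructor <;> omega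
    omega
  · exact (eq_of_set v u p hpv true hu0 hvp).trans (eq_of_set v w q hqv true hw0 hvq).symm

lemma vtSyn_nil : vtSyn [] = 0 := by simp [vtSyn]

lemma vtSyn_singleton (a : Bool) : vtSyn [a] = if a then 1 else 0 := by
  rw [vtSyn_cons, vtSyn_nil]
  simp

/-- Single-edit ball: all strings obtainable by at most one insertion, deletion or substitution. -/
def editBall (u : List Bool) : Set (List Bool) :=
  {w | w = u ∨ (∃ j < u.length, w = u.eraseIdx j) ∨
       (∃ j ≤ u.length, ∃ b : Bool, w = u.insertIdx j b) ∨
       (∃ j < u.length, ∃ b : Bool, w = u.set j b)}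

theorem stmt5 (k : ℕ) (hk : 0 < k) (a : ZMod (2 * k)) (u w : List Bool)
    (hu : u.length = k) (hw : w.length = k)
    (hua : ((vtSyn u : ℕ) : ZMod (2 * k)) = a)
    (hwa : ((vtSyn w : ℕ) : ZMod (2 * k)) = a)
    (hne : u ≠ w) :
    editBall u ∩ editBall w = ∅ := by
  have hdvd : (2 * (k:ℤ)) ∣ (vtSyn u : ℤ) - (vtSyn w : ℤ) := by
    have hmod : vtSyn w ≡ vtSyn u [MOD 2*k] :=
      (ZMod.natCast_eq_natCast_iff _ _ _).mp (hwa.trans hua.symm)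
    have := hmod.dvd
    push_cast at this
    exact this
  rcases Nat.lt_or_ge k 2 with hk1 | hk2
  · -- k = 1
    have hk' : k = 1 := by omega
    subst hk'
    exfalso
    apply hne
    match u, w, hu, hw with
    | [a'], [d'], _, _ =>
      rw [vtSyn_singleton, vtSyn_singleton] at hdvd
      cases a' <;> cases d' <;> simp at hdvd ⊢ <;> omega
  · apply Set.eq_empty_iff_forall_notMem.mpr
    rintro v ⟨hvu, hvw⟩
    simp only [editBall, Set.mem_setOf_eq] at hvu hvw
    have hnorm : ∀ (x : List Bool), x.length = k →
        (v = x ∨ (∃ j < x.length, v = x.eraseIdx j) ∨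
          (∃ j ≤ x.length, ∃ b : Bool, v = x.insertIdx j b) ∨
          (∃ j < x.length, ∃ b : Bool, v = x.set j b)) →
        (∃ j < k, v = x.eraseIdx j) ∨ (∃ j ≤ k, ∃ b : Bool, v = x.insertIdx j b) ∨
          (∃ j < k, ∃ b : Bool, v = x.set j b) := by
      intro x hx hv
      rcases hv with h | ⟨j, h1, h2⟩ | ⟨j, h1, b, h2⟩ | ⟨j, h1, b, h2⟩
      · right; right
        refine ⟨0, by omega, x[0]'(by omega), ?_⟩
        rw [set_self x 0 (by omega)]
        exact h
      · exact Or.inl ⟨j, by omega, h2⟩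
      · exact Or.inr (Or.inl ⟨j, by omega, b, h2⟩)
      · exact Or.inr (Or.inr ⟨j, by omega, b, h2⟩)
    have lenE : ∀ (x : List Bool) (j : ℕ), x.length = k → j < k →
        (x.eraseIdx j).length = k - 1 := by
      intro x j hx hj
      rw [List.length_eraseIdx, if_pos (by omega), hx]
    have lenI : ∀ (x : List Bool) (j : ℕ) (b : Bool), x.length = k → j ≤ k →
        (x.insertIdx j b).length = k + 1 := by
      intro x j b hx hj
      rw [List.length_insertIdx_of_le_length (by omega : j ≤ x.length), hx]
    have lenS : ∀ (x : List Bool) (j : ℕ) (b : Bool), x.length = k →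
        (x.set j b).length = k := by
      intro x j b hx
      rw [List.length_set, hx]
    rcases hnorm u hu hvu with ⟨p, hp, h1⟩ | ⟨p, hp, b, h1⟩ | ⟨p, hp, b, h1⟩ <;>
      rcases hnorm w hw hvw with ⟨q, hq, h2⟩ | ⟨q, hq, c, h2⟩ | ⟨q, hq, c, h2⟩
    · exact hne (case_DD k p q u w v hu hw hp hq h1 h2 hdvd)
    · exfalso
      have a1 := lenE u p hu hp; rw [← h1] at a1
      have a2 := lenI w q c hw hq; rw [← h2] at a2
      omega
    · exfalso
      have a1 := lenE u p hu hp; rw [← h1] at a1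
      have a2 := lenS w q c hw; rw [← h2] at a2
      omega
    · exfalso
      have a1 := lenI u p b hu hp; rw [← h1] at a1
      have a2 := lenE w q hw hq; rw [← h2] at a2
      omega
    · exact hne (case_II k p q u w v b c hk2 hu hw hp hq h1 h2 hdvd)
    · exfalso
      have a1 := lenI u p b hu hp; rw [← h1] at a1
      have a2 := lenS w q c hw; rw [← h2] at a2
      omega
    · exfalso
      have a1 := lenS u p b hu; rw [← h1] at a1
      have a2 := lenE w q hw hq; rw [← h2] at a2
      omega
    · exfalso
      have a1 := lenS u p b hu; rw [← h1] at a1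
      have a2 := lenI w q c hw hq; rw [← h2] at a2
      omega
    · exact hne (case_SS k p q u w v b c hu hw hp hq h1 h2 hdvd)
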